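/- Let u: [1,∞) → ℝ be continuous and satisfy u(r) + (1/((n-1)r))(∫₁^r u(t) dt)² ≤ C for all r ≥ 1, where C > 0. Then ∫₁^r u(t) dt ≤ √((n-1)Cr) for all r ≥ 1. -/

import Mathlib

/-!
Write `F r = ∫₁^r u` and `B r = √((n-1) C r)`, so that `F 1 = 0 < B 1`. Wherever `F` touches
the barrier `B`, the hypothesis gives `u = F' ≤ C - F² / ((n-1) r) = 0 < B'`, so `F` can never
cross `B`.
-/

open Set

theorem hasDerivWithinAt_integral_Ici_of_continuousOn {u : ℝ → ℝ} {x₀ x : ℝ}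
    (hu : ContinuousOn u (Ici x₀)) (hx : x₀ ≤ x) :
    HasDerivWithinAt (fun r => ∫ t in x₀..r, u t) (u x) (Ici x) x := by
  have hsub : Ioi x ⊆ Ici x₀ := Ioi_subset_Ici hx
  exact intervalIntegral.integral_hasDerivWithinAt_right (t := Ioi x)
    (hu.mono (uIcc_of_le hx ▸ Icc_subset_Ici_self)).intervalIntegrable
    ((hu.mono hsub).stronglyMeasurableAtFilter_nhdsWithin measurableSet_Ioi x)
    ((hu.continuousWithinAt hx).mono hsub)

theorem continuousOn_integral_Icc_of_continuousOn_Ici {u : ℝ → ℝ} {x₀ r : ℝ}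
    (hu : ContinuousOn u (Ici x₀)) (hr : x₀ ≤ r) :
    ContinuousOn (fun x => ∫ t in x₀..x, u t) (Icc x₀ r) := by
  rw [← uIcc_of_le hr]
  exact intervalIntegral.continuousOn_primitive_interval
    ((hu.mono (uIcc_of_le hr ▸ Icc_subset_Ici_self)).integrableOn_compact isCompact_uIcc)

theorem hasDerivAt_sqrt_const_mul {k x : ℝ} (hkx : k * x ≠ 0) :
    HasDerivAt (fun r => √(k * r)) (k / (2 * √(k * x))) x := by
  simpa using ((hasDerivAt_id x).const_mul k).sqrt hkx

theorem nonpos_of_riccati_of_eq_sqrt {a C x v F : ℝ} (ha : 0 < a) (hC : 0 < C) (hx : 0 < x)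
    (hineq : v + F ^ 2 / (a * x) ≤ C) (hF : F = √(a * C * x)) : v ≤ 0 := by
  have hsq : F ^ 2 / (a * x) = C := by
    rw [hF, Real.sq_sqrt (by positivity)]
    field_simp
  linarith

theorem integral_le_sqrt_of_riccati {a C x₀ : ℝ} (ha : 0 < a) (hC : 0 < C) (hx₀ : 0 < x₀)
    {u : ℝ → ℝ} (hu : ContinuousOn u (Ici x₀))
    (hineq : ∀ r, x₀ ≤ r → u r + (∫ t in x₀..r, u t) ^ 2 / (a * r) ≤ C)
    {r : ℝ} (hr : x₀ ≤ r) :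
    ∫ t in x₀..r, u t ≤ √(a * C * r) := by
  have hk : 0 < a * C := mul_pos ha hC
  refine image_le_of_deriv_right_lt_deriv_boundary'
    (continuousOn_integral_Icc_of_continuousOn_Ici hu hr)
    (fun x hx => hasDerivWithinAt_integral_Ici_of_continuousOn hu hx.1)
    (by simp)
    (Real.continuous_sqrt.comp (continuous_const_mul _)).continuousOn
    (fun x hx => (hasDerivAt_sqrt_const_mul (mul_pos hk (hx₀.trans_le hx.1)).ne').hasDerivWithinAt)
    (fun x hx htouch => ?_) ⟨hr, le_rfl⟩
  have hxpos : 0 < x := hx₀.trans_le hx.1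
  calc u x ≤ 0 := nonpos_of_riccati_of_eq_sqrt ha hC hxpos (hineq x hx.1) htouch
    _ < a * C / (2 * √(a * C * x)) := by
      have : 0 < √(a * C * x) := Real.sqrt_pos.mpr (mul_pos hk hxpos)
      positivity

/-- Let `u : [1,∞) → ℝ` be continuous and satisfy
`u(r) + (1/((n-1)r)) (∫₁^r u(t) dt)² ≤ C` for all `r ≥ 1`, where `C > 0`.  Then
`∫₁^r u(t) dt ≤ √((n-1) C r)` for all `r ≥ 1`. -/
theorem riccati_integral_comparison
    (n : ℕ) (hn : 2 ≤ n) (C : ℝ) (hC : 0 < C)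
    (u : ℝ → ℝ) (hu : ContinuousOn u (Set.Ici 1))
    (hineq : ∀ r : ℝ, 1 ≤ r →
      u r + (1 / (((n : ℝ) - 1) * r)) * (∫ t in (1:ℝ)..r, u t) ^ 2 ≤ C) :
    ∀ r : ℝ, 1 ≤ r →
      (∫ t in (1:ℝ)..r, u t) ≤ Real.sqrt (((n : ℝ) - 1) * C * r) := by
  have hn1 : (0 : ℝ) < n - 1 := by
    have : (2 : ℝ) ≤ n := by exact_mod_cast hn
    linarith
  intro r hr
  refine integral_le_sqrt_of_riccati hn1 hC one_pos hu (fun x hx => ?_) hr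
  simpa only [one_div_mul_eq_div] using hineq x hx
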